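/- Let q ≥ 1 be an integer and let c : ℤ[i] → ℂ be finitely supported and supported on odd primitive Gaussian integers. Define S'''_q = Σ_{z₁ = u₁+iv₁, z₂ = u₂+iv₂ ∈ ℤ[i], u₁v₂ ≡ u₂v₁ (mod q), gcd(v₁v₂, q) = 1, z₁ and z₂ each coprime to q in ℤ[i]} c(z₁)·conj(c(z₂)). Then 0 ≤ S'''_q ≤ S'_q. -/

import Mathlib

open scoped ComplexConjugate
open scoped Classical

noncomputable section

/-- `z = u+iv` is *odd primitive*: `u ≢ v (mod 2)`, `gcd(u,v) = 1`, `uv ≠ 0`. -/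
def OddPrimitive (z : GaussianInt) : Prop :=
  ¬ z.re ≡ z.im [ZMOD 2] ∧ Int.gcd z.re z.im = 1 ∧ z.re * z.im ≠ 0

/-- The determinant sum `S_q = ∑_{u₁v₂ ≡ u₂v₁ (mod q)} c(z₁) conj (c(z₂))`. -/
def detSum (c : GaussianInt → ℂ) (q : ℕ) : ℂ :=
  ∑ᶠ z₁ : GaussianInt, ∑ᶠ z₂ : GaussianInt,
    if (q : ℤ) ∣ (z₁.re * z₂.im - z₂.re * z₁.im) then c z₁ * conj (c z₂) else 0

/-- The reduced determinant sum `S'_q`, with the extra condition `gcd(v₁v₂, q) = 1`. -/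
def detSum' (c : GaussianInt → ℂ) (q : ℕ) : ℂ :=
  ∑ᶠ z₁ : GaussianInt, ∑ᶠ z₂ : GaussianInt,
    if (q : ℤ) ∣ (z₁.re * z₂.im - z₂.re * z₁.im) ∧ Int.gcd (z₁.im * z₂.im) q = 1
    then c z₁ * conj (c z₂) else 0

/-- `S(Q,X) = ∑_{1 ≤ q ≤ Q} S_q` (the dependence on `X` is through the support of `c`). -/
def SQX (c : GaussianInt → ℂ) (Q : ℝ) : ℂ :=
  ∑ q ∈ Finset.Icc 1 ⌊Q⌋₊, detSum c q

/-- `c` is supported on odd primitive Gaussian integers `z` with `1 < |z|² ≤ X`. -/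
def SuppOK (c : GaussianInt → ℂ) (X : ℝ) : Prop :=
  ∀ z : GaussianInt, c z ≠ 0 →
    OddPrimitive z ∧ 1 < (Zsqrtd.norm z : ℝ) ∧ (Zsqrtd.norm z : ℝ) ≤ X

/-- The Siegel–Walfisz condition with exponent `B` and constant `K`. -/
def SWCond (c : GaussianInt → ℂ) (X B K : ℝ) : Prop :=
  ∀ (k ℓ : ℕ), 1 ≤ ℓ → ∀ (α : GaussianInt) (t : ℝ),
    ‖∑ᶠ z : GaussianInt,
        if z ≠ 0 ∧ (ℓ : GaussianInt) ∣ (z - α) then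
          c z * (conj (GaussianInt.toComplex z) / GaussianInt.toComplex z) ^ k *
            ((‖GaussianInt.toComplex z‖ : ℝ) : ℂ) ^ ((t : ℂ) * Complex.I)
        else 0‖
      ≤ K * (ℓ : ℝ) ^ 2 * ((k : ℝ) ^ 2 + 1) * (t ^ 2 + 1) * X * Real.log X ^ (-B)

/-- The restricted determinant sum `S'''_q`: besides `u₁v₂ ≡ u₂v₁ (mod q)` and
`gcd(v₁v₂,q) = 1` we require that `z₁` and `z₂` are coprime to `q` in `ℤ[i]`. -/
def detSum''' (c : GaussianInt → ℂ) (q : ℕ) : ℂ :=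
  ∑ᶠ z₁ : GaussianInt, ∑ᶠ z₂ : GaussianInt,
    if (q : ℤ) ∣ (z₁.re * z₂.im - z₂.re * z₁.im) ∧ Int.gcd (z₁.im * z₂.im) q = 1 ∧
        IsCoprime z₁ (q : GaussianInt) ∧ IsCoprime z₂ (q : GaussianInt)
    then c z₁ * conj (c z₂) else 0

/-! Write `ρ(z) = Re z · (Im z)⁻¹ mod q` for `z` with `Im z` invertible mod `q`. For such
`z₁, z₂` the determinant condition `u₁v₂ ≡ u₂v₁ (mod q)` says `ρ(z₁) = ρ(z₂)`, so `S'_q` is the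
sum over residues `r` of `|∑_{ρ(z) = r} c(z)|²`. Since `(Im z₁) z₂ ≡ (Im z₂) z₁ (mod q)` when
`ρ(z₁) = ρ(z₂)`, coprimality to `q` in `ℤ[i]` is constant on the fibres of `ρ`, so `S'''_q` is
the same sum of squares taken over only some of the fibres. -/

open Finset

section FiberSums

variable {ι κ : Type*}

theorem finsum_finsum_ite_mul_conj {c : ι → ℂ} (hfin : (Function.support c).Finite)
    (P : ι → ι → Prop) [∀ x y, Decidable (P x y)] :
    ∑ᶠ x, ∑ᶠ y, (if P x y then c x * conj (c y) else 0) =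
      ∑ x ∈ hfin.toFinset, ∑ y ∈ hfin.toFinset, if P x y then c x * conj (c y) else 0 := by
  have hc : ∀ x y, (if P x y then c x * conj (c y) else 0) ≠ 0 → c x ≠ 0 ∧ c y ≠ 0 :=
    fun x y h => by split_ifs at h <;> simp_all
  rw [finsum_eq_finsetSum_of_support_subset _ fun x hx => ?_]
  · refine sum_congr rfl fun x _ => finsum_eq_finsetSum_of_support_subset _ fun y hy => ?_
    simpa using (hc x y hy).2
  · obtain ⟨y, hy⟩ : ∃ y, (if P x y then c x * conj (c y) else 0) ≠ 0 := by
      by_contra! h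
      exact hx (by simp [h])
    simpa using (hc x y hy).1

theorem sum_sum_ite_eq_sum_filter_sum_filter {M : Type*} [AddCommMonoid M] (s : Finset ι)
    (A : ι → Prop) [DecidablePred A] (P Q : ι → ι → Prop) [∀ x y, Decidable (P x y)]
    [∀ x y, Decidable (Q x y)] (hPQ : ∀ x ∈ s, ∀ y ∈ s, P x y ↔ A x ∧ A y ∧ Q x y)
    (g : ι → ι → M) :
    ∑ x ∈ s, ∑ y ∈ s, (if P x y then g x y else 0) =
      ∑ x ∈ s with A x, ∑ y ∈ s with A y, if Q x y then g x y else 0 := by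
  rw [sum_filter]
  refine sum_congr rfl fun x hx => ?_
  split_ifs with hAx
  · rw [sum_filter]
    exact sum_congr rfl fun y hy => by simp [hPQ x hx y hy, hAx, ite_and]
  · exact sum_eq_zero fun y hy => by simp [hPQ x hx y hy, hAx]

variable [DecidableEq κ]

theorem sum_sum_ite_mul_conj_eq_sum_normSq (s : Finset ι) (f : ι → κ) (c : ι → ℂ) :
    ∑ x ∈ s, ∑ y ∈ s, (if f x = f y then c x * conj (c y) else 0) =
      ((∑ r ∈ s.image f, Complex.normSq (∑ x ∈ s with f x = r, c x) : ℝ) : ℂ) := by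
  have hmaps : ∀ x ∈ s, f x ∈ s.image f := fun x hx => mem_image_of_mem f hx
  calc _ = ∑ x ∈ s, ∑ y ∈ s with f y = f x, c x * conj (c y) := by
          refine sum_congr rfl fun x _ => ?_
          simp_rw [sum_filter, eq_comm]
    _ = ∑ r ∈ s.image f, ∑ x ∈ s with f x = r, ∑ y ∈ s with f y = r, c x * conj (c y) := by
          rw [← sum_fiberwise_of_maps_to hmaps]
          exact sum_congr rfl fun r _ => sum_congr rfl fun x hx => by rw [(mem_filter.1 hx).2]
    _ = _ := by
          push_cast
          refine sum_congr rfl fun r _ => ?_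
          rw [← Complex.mul_conj, map_sum, sum_mul_sum]

theorem sum_normSq_fiber_filter_le (s : Finset ι) (f : ι → κ) (c : ι → ℂ) (P : ι → Prop)
    [DecidablePred P] (hP : ∀ x ∈ s, ∀ y ∈ s, f x = f y → P x → P y) :
    ∑ r ∈ (s.filter P).image f, Complex.normSq (∑ x ∈ s.filter P with f x = r, c x) ≤
      ∑ r ∈ s.image f, Complex.normSq (∑ x ∈ s with f x = r, c x) := by
  calc _ = ∑ r ∈ (s.filter P).image f, Complex.normSq (∑ x ∈ s with f x = r, c x) := by
          refine sum_congr rfl fun r hr => ?_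
          obtain ⟨y, hy, rfl⟩ := mem_image.1 hr
          rw [mem_filter] at hy
          rw [filter_filter]
          congr 2
          exact filter_congr fun x hx => and_iff_right_of_imp fun h => hP y hy.1 x hx h.symm hy.2
    _ ≤ _ := sum_le_sum_of_subset_of_nonneg (image_subset_image (filter_subset _ _))
          fun _ _ _ => Complex.normSq_nonneg _

end FiberSums

namespace GaussianInt

def ratioMod (q : ℕ) (z : GaussianInt) : ZMod q := z.re * (z.im : ZMod q)⁻¹

theorem dvd_det_iff_ratioMod_eq {q : ℕ} {z₁ z₂ : GaussianInt} (h₁ : IsUnit (z₁.im : ZMod q))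
    (h₂ : IsUnit (z₂.im : ZMod q)) :
    (q : ℤ) ∣ z₁.re * z₂.im - z₂.re * z₁.im ↔ ratioMod q z₁ = ratioMod q z₂ := by
  have i₁ := ZMod.mul_inv_of_unit _ h₁
  have i₂ := ZMod.mul_inv_of_unit _ h₂
  rw [← ZMod.intCast_zmod_eq_zero_iff_dvd, ratioMod, ratioMod]
  push_cast
  constructor <;> intro h
  · linear_combination (z₁.im : ZMod q)⁻¹ * (z₂.im : ZMod q)⁻¹ * h
      + z₂.re * (z₂.im : ZMod q)⁻¹ * i₁ - z₁.re * (z₁.im : ZMod q)⁻¹ * i₂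
  · linear_combination (z₁.im : ZMod q) * z₂.im * h - z₁.re * z₂.im * i₁ + z₂.re * z₁.im * i₂

theorem dvd_det_and_gcd_eq_one_iff {q : ℕ} {z₁ z₂ : GaussianInt} :
    ((q : ℤ) ∣ z₁.re * z₂.im - z₂.re * z₁.im ∧ Int.gcd (z₁.im * z₂.im) q = 1) ↔
      IsUnit (z₁.im : ZMod q) ∧ IsUnit (z₂.im : ZMod q) ∧ ratioMod q z₁ = ratioMod q z₂ := by
  have hunit :
      Int.gcd (z₁.im * z₂.im) q = 1 ↔ IsUnit (z₁.im : ZMod q) ∧ IsUnit (z₂.im : ZMod q) := by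
    rw [← Int.isCoprime_iff_gcd_eq_one, IsCoprime.mul_left_iff, ZMod.coe_int_isUnit_iff_isCoprime,
      ZMod.coe_int_isUnit_iff_isCoprime]
    exact and_congr isCoprime_comm isCoprime_comm
  rw [hunit]
  constructor
  · rintro ⟨hdvd, h₁, h₂⟩
    exact ⟨h₁, h₂, (dvd_det_iff_ratioMod_eq h₁ h₂).1 hdvd⟩
  · rintro ⟨h₁, h₂, heq⟩
    exact ⟨(dvd_det_iff_ratioMod_eq h₁ h₂).2 heq, h₁, h₂⟩

theorem isCoprime_of_dvd_det {q : ℤ} {z₁ z₂ : GaussianInt}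
    (hdet : q ∣ z₁.re * z₂.im - z₂.re * z₁.im) (h₂ : IsCoprime z₂.im q)
    (h₁ : IsCoprime z₁ (q : GaussianInt)) : IsCoprime z₂ (q : GaussianInt) := by
  obtain ⟨m, hm⟩ := hdet
  have hcomb : (z₁.im : GaussianInt) * z₂ = z₂.im * z₁ + q * (-m : ℤ) := by
    ext <;> simp [Zsqrtd.re_mul, Zsqrtd.im_mul] <;> linarith
  have h₂' : IsCoprime (z₂.im : GaussianInt) q := h₂.intCast
  have : IsCoprime ((z₁.im : GaussianInt) * z₂) q := by
    rw [hcomb]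
    exact (h₂'.mul_left h₁).add_mul_left_left _
  exact this.of_mul_left_right

end GaussianInt

open GaussianInt

theorem detSum'''_le_detSum'_general (c : GaussianInt → ℂ) (hfin : (Function.support c).Finite)
    (q : ℕ) :
    (detSum''' c q).im = 0 ∧ (detSum' c q).im = 0 ∧
    0 ≤ (detSum''' c q).re ∧ (detSum''' c q).re ≤ (detSum' c q).re := by
  set ρ := ratioMod q
  set t := hfin.toFinset.filter fun z : GaussianInt => IsUnit (z.im : ZMod q)
  set P := fun z : GaussianInt => IsCoprime z (q : GaussianInt)
  have hS' : detSum' c q =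
      ((∑ r ∈ t.image ρ, Complex.normSq (∑ z ∈ t with ρ z = r, c z) : ℝ) : ℂ) := by
    rw [detSum', finsum_finsum_ite_mul_conj hfin, sum_sum_ite_eq_sum_filter_sum_filter _
      (fun z => IsUnit (z.im : ZMod q)) _ (fun z₁ z₂ => ρ z₁ = ρ z₂)
      (fun _ _ _ _ => dvd_det_and_gcd_eq_one_iff), sum_sum_ite_mul_conj_eq_sum_normSq]
  have hS''' : detSum''' c q =
      ((∑ r ∈ (t.filter P).image ρ,
        Complex.normSq (∑ z ∈ t.filter P with ρ z = r, c z) : ℝ) : ℂ) := by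
    rw [detSum''', finsum_finsum_ite_mul_conj hfin, filter_filter,
      sum_sum_ite_eq_sum_filter_sum_filter _ (fun z => IsUnit (z.im : ZMod q) ∧ P z) _
        (fun z₁ z₂ => ρ z₁ = ρ z₂) (fun _ _ _ _ => ?_), sum_sum_ite_mul_conj_eq_sum_normSq]
    rw [← and_assoc, dvd_det_and_gcd_eq_one_iff]
    tauto
  have hP : ∀ z₁ ∈ t, ∀ z₂ ∈ t, ρ z₁ = ρ z₂ → P z₁ → P z₂ := fun z₁ h₁ z₂ h₂ hρ hP₁ => by
    have hu₁ := (mem_filter.1 h₁).2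
    have hu₂ := (mem_filter.1 h₂).2
    exact isCoprime_of_dvd_det ((dvd_det_iff_ratioMod_eq hu₁ hu₂).2 hρ)
      ((ZMod.coe_int_isUnit_iff_isCoprime _ _).1 hu₂).symm hP₁
  rw [hS', hS''']
  simp only [Complex.ofReal_im, Complex.ofReal_re, true_and]
  exact ⟨sum_nonneg fun _ _ => Complex.normSq_nonneg _, sum_normSq_fiber_filter_le t ρ c P hP⟩

/-- **Estimate (2.3)–(2.4).** If `c` is finitely supported and supported on odd primitive
Gaussian integers, then `0 ≤ S'''_q ≤ S'_q` (and both sums are real). -/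
theorem detSum'''_le_detSum' (c : GaussianInt → ℂ) (hfin : (Function.support c).Finite)
    (hsupp : ∀ z : GaussianInt, c z ≠ 0 → OddPrimitive z) (q : ℕ) (hq : 1 ≤ q) :
    (detSum''' c q).im = 0 ∧ (detSum' c q).im = 0 ∧
    0 ≤ (detSum''' c q).re ∧ (detSum''' c q).re ≤ (detSum' c q).re :=
  detSum'''_le_detSum'_general c hfin q
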